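/- The completion of a consistent theory is consistent and complete: fix a flower ψ, a ψ-consistent theory 𝒯, and an enumeration (φₙ)ₙ∈ℕ of all flowers. Define the n-completions by 𝒯₀ = 𝒯 and 𝒯ₙ₊₁ = 𝒯ₙ ∪ {φₙ} if 𝒯ₙ ∪ {φₙ} is ψ-consistent, and 𝒯ₙ₊₁ = 𝒯ₙ otherwise; let the completion 𝒯* = ⋃ₙ 𝒯ₙ. Then 𝒯* is ψ-consistent and ψ-complete. -/

import Mathlib

/-! # The flower calculus (Donato), common definitions

Flowers and gardens over a first-order signature `(P, ar)` and variables `V`.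
Finite multisets are represented as lists. -/

namespace Flowers

mutual
/-- Flowers: atoms `p(x⃗)` or `γ ⫐ Δ` with pistil `γ` and petals `Δ`. -/
inductive Flower (V P : Type) (ar : P → ℕ) : Type where
  | atom (p : P) (args : Fin (ar p) → V) : Flower V P ar
  | flw (pistil : Garden V P ar) (petals : List (Garden V P ar)) : Flower V P ar
/-- Gardens: a finite set of binders together with a bouquet of flowers. -/
inductive Garden (V P : Type) (ar : P → ℕ) : Type where
  | mk (binders : List V) (content : List (Flower V P ar)) : Garden V P ar
end

/-- A bouquet is a finite multiset of flowers. -/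
abbrev Bouquet (V P : Type) (ar : P → ℕ) := List (Flower V P ar)

variable {V P : Type} [DecidableEq V] {ar : P → ℕ}

def Garden.binders : Garden V P ar → List V
  | .mk xs _ => xs

def Garden.content : Garden V P ar → List (Flower V P ar)
  | .mk _ Φ => Φ

/-! ## Substitutions -/

/-- The support of a substitution `σ : V → V`. -/
def Supp (σ : V → V) : Set V := {x | σ x ≠ x}

/-- Restriction of a substitution away from a list of (re)bound variables. -/
def restrict (σ : V → V) (xs : List V) : V → V := fun x => if x ∈ xs then x else σ x

mutual
/-- Action of a substitution on a flower. -/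
def applyF (σ : V → V) : Flower V P ar → Flower V P ar
  | .atom p args => .atom p (σ ∘ args)
  | .flw (.mk xs Φ) Δ =>
      .flw (.mk xs (applyL (restrict σ xs) Φ)) (applyP (restrict σ xs) Δ)
/-- Action of a substitution on a bouquet. -/
def applyL (σ : V → V) : List (Flower V P ar) → List (Flower V P ar)
  | [] => []
  | φ :: Φ => applyF σ φ :: applyL σ Φ
/-- Action of a substitution on a corolla (list of gardens). -/
def applyP (σ : V → V) : List (Garden V P ar) → List (Garden V P ar)
  | [] => []
  | .mk ys Ψ :: Δ => .mk ys (applyL (restrict σ ys) Ψ) :: applyP σ Δ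
end

/-- Action of a substitution on a garden. -/
def applyG (σ : V → V) : Garden V P ar → Garden V P ar
  | .mk xs Φ => .mk xs (applyL (restrict σ xs) Φ)

mutual
/-- Bound variables of a flower. -/
def bvF : Flower V P ar → List V
  | .atom _ _ => []
  | .flw γ Δ => bvG γ ++ bvP Δ
/-- Bound variables of a garden. -/
def bvG : Garden V P ar → List V
  | .mk xs Φ => xs ++ bvL Φ
/-- Bound variables of a bouquet. -/
def bvL : List (Flower V P ar) → List V
  | [] => []
  | φ :: Φ => bvF φ ++ bvL Φ
/-- Bound variables of a corolla. -/
def bvP : List (Garden V P ar) → List V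
  | [] => []
  | γ :: Δ => bvG γ ++ bvP Δ
end

/-- `σ` is capture-avoiding in a bouquet `Φ`: `σ(dom σ) ∩ bv(Φ) = ∅`. -/
def CaptAvoid (σ : V → V) (Φ : Bouquet V P ar) : Prop :=
  ∀ x, σ x ≠ x → σ x ∉ bvL Φ

/-! ## Contexts -/

/-- Contexts: a bouquet with exactly one hole, which may occur at top level,
inside the pistil, or inside a petal of a flower. -/
inductive Ctx (V P : Type) (ar : P → ℕ) : Type where
  | hole (Ψ : List (Flower V P ar)) : Ctx V P ar
  | pistil (Ψ : List (Flower V P ar)) (xs : List V) (c : Ctx V P ar)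
      (Δ : List (Garden V P ar)) : Ctx V P ar
  | petal (Ψ : List (Flower V P ar)) (γ : Garden V P ar) (xs : List V) (c : Ctx V P ar)
      (Δ : List (Garden V P ar)) : Ctx V P ar

/-- Filling the hole of a context with a bouquet. -/
def Ctx.fill : Ctx V P ar → Bouquet V P ar → Bouquet V P ar
  | .hole Ψ, Φ => Ψ ++ Φ
  | .pistil Ψ xs c Δ, Φ => Ψ ++ [.flw (.mk xs (c.fill Φ)) Δ]
  | .petal Ψ γ xs c Δ, Φ => Ψ ++ [.flw γ (.mk xs (c.fill Φ) :: Δ)]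

/-- Adjoining a bouquet at the top level of a context. -/
def Ctx.prepend (Φ : Bouquet V P ar) : Ctx V P ar → Ctx V P ar
  | .hole Ψ => .hole (Φ ++ Ψ)
  | .pistil Ψ xs c Δ => .pistil (Φ ++ Ψ) xs c Δ
  | .petal Ψ γ xs c Δ => .petal (Φ ++ Ψ) γ xs c Δ

/-- Filling the hole of a context with another context. -/
def Ctx.fillCtx : Ctx V P ar → Ctx V P ar → Ctx V P ar
  | .hole Ψ, c' => c'.prepend Ψ
  | .pistil Ψ xs c Δ, c' => .pistil Ψ xs (c.fillCtx c') Δ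
  | .petal Ψ γ xs c Δ, c' => .petal Ψ γ xs (c.fillCtx c') Δ

/-- Number of inversions (pistils enclosing the hole) of a context. -/
def Ctx.inv : Ctx V P ar → ℕ
  | .hole _ => 0
  | .pistil _ _ c _ => 1 + c.inv
  | .petal _ _ _ c _ => c.inv

def Ctx.Positive (Ξ : Ctx V P ar) : Prop := Even Ξ.inv
def Ctx.Negative (Ξ : Ctx V P ar) : Prop := ¬ Even Ξ.inv

/-! ## Pollination -/

/-- A flower `φ` can be pollinated in a context `Ξ`. -/
def PollinatedF (φ : Flower V P ar) (Ξ : Ctx V P ar) : Prop :=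
  ∃ (Ψ : Bouquet V P ar), φ ∈ Ψ ∧ ∃ (Ξ' Ξ₀ : Ctx V P ar),
    (Ξ = Ξ'.fillCtx (Ξ₀.prepend Ψ)) ∨
    (∃ (xs ys : List V) (Δ : List (Garden V P ar)),
      Ξ = Ξ'.fillCtx (Ctx.petal [] (.mk xs Ψ) ys Ξ₀ Δ))

/-- A bouquet can be pollinated in `Ξ` if each of its flowers can. -/
def Pollinated (Φ : Bouquet V P ar) (Ξ : Ctx V P ar) : Prop :=
  ∀ φ ∈ Φ, PollinatedF φ Ξ

/-! ## Rules. A step `Φ ⇝ Ψ` has conclusion `Φ` and premiss `Ψ`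
(backward / bottom-up reading). -/

/-- Shallow natural steps: instances of the natural rules 𝒩 in the empty context. -/
inductive NShallow : Bouquet V P ar → Bouquet V P ar → Prop where
  | polld (Ξ : Ctx V P ar) (Φ : Bouquet V P ar) (h : Pollinated Φ Ξ) :
      NShallow (Ξ.fill Φ) (Ξ.fill [])
  | pollu (Ξ : Ctx V P ar) (Φ : Bouquet V P ar) (h : Pollinated Φ Ξ) :
      NShallow (Ξ.fill []) (Ξ.fill Φ)
  | epis (Φ : Bouquet V P ar) :
      NShallow [.flw (.mk [] []) [.mk [] Φ]] Φ
  | epet (γ : Garden V P ar) (Δ₁ Δ₂ : List (Garden V P ar)) :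
      NShallow [.flw γ (Δ₁ ++ .mk [] [] :: Δ₂)] []
  | srep (xs : List V) (Φ₁ Φ₂ : List (Flower V P ar)) (γs Δ : List (Garden V P ar)) :
      NShallow [.flw (.mk xs (Φ₁ ++ .flw (.mk [] []) γs :: Φ₂)) Δ]
        [.flw (.mk xs (Φ₁ ++ Φ₂)) [.mk [] (γs.map (fun γ => .flw γ Δ))]]
  | ipis (xs ys : List V) (Φ : List (Flower V P ar)) (Δ : List (Garden V P ar))
      (σ : V → V) (hsupp : Supp σ = {x | x ∈ ys})
      (hca : CaptAvoid σ [.flw (.mk [] Φ) Δ]) :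
      NShallow [.flw (.mk (xs ++ ys) Φ) Δ]
        [.flw (.mk xs (applyL σ Φ)) (applyP σ Δ), .flw (.mk (xs ++ ys) Φ) Δ]
  | ipet (γ : Garden V P ar) (xs ys : List V) (Φ : List (Flower V P ar))
      (Δ₁ Δ₂ : List (Garden V P ar)) (σ : V → V) (hsupp : Supp σ = {x | x ∈ ys})
      (hca : CaptAvoid σ Φ) :
      NShallow [.flw γ (Δ₁ ++ .mk (xs ++ ys) Φ :: Δ₂)]
        [.flw γ (Δ₁ ++ .mk xs (applyL σ Φ) :: .mk (xs ++ ys) Φ :: Δ₂)]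

/-- Natural steps: shallow natural steps closed under arbitrary contexts. -/
def NStep (Φ Ψ : Bouquet V P ar) : Prop :=
  ∃ (Ξ : Ctx V P ar) (Φ₀ Ψ₀ : Bouquet V P ar),
    NShallow Φ₀ Ψ₀ ∧ Φ = Ξ.fill Φ₀ ∧ Ψ = Ξ.fill Ψ₀

/-- Cultural steps, applying in positive or negative contexts. -/
inductive CStep : Bouquet V P ar → Bouquet V P ar → Prop where
  | grow (Ξ : Ctx V P ar) (hΞ : Ξ.Positive) (Φ : Bouquet V P ar) :
      CStep (Ξ.fill []) (Ξ.fill Φ)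
  | crop (Ξ : Ctx V P ar) (hΞ : Ξ.Negative) (Φ : Bouquet V P ar) :
      CStep (Ξ.fill Φ) (Ξ.fill [])
  | pull (Ξ : Ctx V P ar) (hΞ : Ξ.Positive) (γ : Garden V P ar)
      (Γ Δ : List (Garden V P ar)) :
      CStep (Ξ.fill [.flw γ (Γ ++ Δ)]) (Ξ.fill [.flw γ Δ])
  | glue (Ξ : Ctx V P ar) (hΞ : Ξ.Negative) (γ : Garden V P ar)
      (Γ Δ : List (Garden V P ar)) :
      CStep (Ξ.fill [.flw γ Δ]) (Ξ.fill [.flw γ (Γ ++ Δ)])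
  | apis (Ξ : Ctx V P ar) (hΞ : Ξ.Positive) (xs ys : List V)
      (Φ : List (Flower V P ar)) (Δ : List (Garden V P ar)) (σ : V → V)
      (hsupp : Supp σ = {x | x ∈ ys}) (hca : CaptAvoid σ [.flw (.mk [] Φ) Δ]) :
      CStep (Ξ.fill [.flw (.mk xs (applyL σ Φ)) (applyP σ Δ)])
        (Ξ.fill [.flw (.mk (xs ++ ys) Φ) Δ])
  | apet (Ξ : Ctx V P ar) (hΞ : Ξ.Negative) (γ : Garden V P ar) (xs ys : List V)
      (Φ : List (Flower V P ar)) (Δ : List (Garden V P ar)) (σ : V → V)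
      (hsupp : Supp σ = {x | x ∈ ys}) (hca : CaptAvoid σ Φ) :
      CStep (Ξ.fill [.flw γ (.mk xs (applyL σ Φ) :: Δ)])
        (Ξ.fill [.flw γ (.mk (xs ++ ys) Φ :: Δ)])

/-- A step in the full flower calculus 𝒩 ∪ 𝒞. -/
def Step (Φ Ψ : Bouquet V P ar) : Prop := NStep Φ Ψ ∨ CStep Φ Ψ

/-- Derivations: finite sequences of rewrite steps. -/
def Deriv (R : Bouquet V P ar → Bouquet V P ar → Prop) :
    Bouquet V P ar → Bouquet V P ar → Prop :=
  Relation.ReflTransGen R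

/-- Hypothetical provability `Ψ ⊢_R Φ`. -/
def HypProv (R : Bouquet V P ar → Bouquet V P ar → Prop) (Ψ Φ : Bouquet V P ar) : Prop :=
  ∀ Ξ : Ctx V P ar, Pollinated Ψ Ξ → Deriv R (Ξ.fill Φ) (Ξ.fill [])

/-! ## Theories -/

/-- Provability of a bouquet from a theory (in the natural fragment). -/
def TDerives (T : Set (Flower V P ar)) (Φ : Bouquet V P ar) : Prop :=
  ∃ Ψ : Bouquet V P ar, (∀ φ ∈ Ψ, φ ∈ T) ∧ HypProv NStep Ψ Φ

/-- `ψ`-consistency of a theory. -/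
def PsiConsistent (ψ : Flower V P ar) (T : Set (Flower V P ar)) : Prop :=
  ¬ TDerives T [ψ]

/-- `ψ`-completeness of a theory. -/
def PsiComplete (ψ : Flower V P ar) (T : Set (Flower V P ar)) : Prop :=
  ∀ φ : Flower V P ar, TDerives (insert φ T) [ψ] ∨ φ ∈ T

/-! ## Kripke semantics -/

/-- Kripke structures over the signature `(P, ar)`, with monotone domains `M w`
inside an ambient type `D` and monotone interpretations. -/
structure Kripke (V P : Type) (ar : P → ℕ) where
  W : Type
  D : Type
  le : W → W → Prop
  le_refl : ∀ w, le w w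
  le_trans : ∀ {a b c}, le a b → le b c → le a c
  M : W → Set D
  M_nonempty : ∀ w, (M w).Nonempty
  interp : (p : P) → W → Set (Fin (ar p) → D)
  interp_dom : ∀ p w f, f ∈ interp p w → ∀ i, f i ∈ M w
  M_mono : ∀ {w w'}, le w w' → M w ⊆ M w'
  interp_mono : ∀ (p : P) {w w'}, le w w' → interp p w ⊆ interp p w'

/-- `e` is a `w`-valuation. -/
def Kripke.IsVal (K : Kripke V P ar) (w : K.W) (e : V → K.D) : Prop :=
  ∀ x, e x ∈ K.M w

/-- Update of a valuation on a set of variables: `e⟨xs ↦ e'⟩`. -/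
def upd {D : Type} (e : V → D) (xs : List V) (e' : V → D) : V → D :=
  fun x => if x ∈ xs then e' x else e x

mutual
/-- Forcing of a flower: `w ⊩ φ[e]`. -/
def forcesF (K : Kripke V P ar) (w : K.W) (e : V → K.D) : Flower V P ar → Prop
  | .atom p args => (fun i => e (args i)) ∈ K.interp p w
  | .flw (.mk xs Φ) Δ =>
      ∀ w', K.le w w' → ∀ e' : V → K.D, K.IsVal w' e' →
        forcesL K w' (upd e xs e') Φ → forcesP K w' (upd e xs e') Δ
/-- Forcing of a bouquet: each of its flowers is forced. -/
def forcesL (K : Kripke V P ar) (w : K.W) (e : V → K.D) : List (Flower V P ar) → Prop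
  | [] => True
  | φ :: Φ => forcesF K w e φ ∧ forcesL K w e Φ
/-- Forcing of the petals: some petal has its content forced for some valuation
of its binders. -/
def forcesP (K : Kripke V P ar) (w : K.W) (e : V → K.D) : List (Garden V P ar) → Prop
  | [] => False
  | .mk ys Ψ :: Δ =>
      (∃ e'' : V → K.D, K.IsVal w e'' ∧ forcesL K w (upd e ys e'') Ψ) ∨ forcesP K w e Δ
end

/-- Semantic entailment `Φ ⊨ Ψ`: in every Kripke structure, every world and
valuation forcing `Φ` forces `Ψ`. -/
def SemEntails (Φ Ψ : Bouquet V P ar) : Prop :=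
  ∀ (K : Kripke V P ar) (w : K.W) (e : V → K.D),
    K.IsVal w e → forcesL K w e Φ → forcesL K w e Ψ

/-! ## The universal Kripke structure -/

/-- The universal Kripke structure `𝔉(ψ)`: worlds are the `ψ`-consistent and
`ψ`-complete theories ordered by inclusion, the domain is `V`, and
`⟦p⟧_𝒯 = {x⃗ | p(x⃗) ∈ 𝒯}`. -/
noncomputable def universalKripke [Nonempty V] (ψ : Flower V P ar) : Kripke V P ar where
  W := {T : Set (Flower V P ar) // PsiConsistent ψ T ∧ PsiComplete ψ T}
  D := V
  le T T' := T.1 ⊆ T'.1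
  le_refl _ := subset_rfl
  le_trans := fun {_a _b _c} h h' => Set.Subset.trans h h'
  M _ := Set.univ
  M_nonempty _ := Set.univ_nonempty
  interp p T := {args | Flower.atom p args ∈ T.1}
  interp_dom _ _ _ _ _ := Set.mem_univ _
  M_mono := fun {_w _w'} _ => subset_rfl
  interp_mono := fun _ {_w _w'} h _ hf => h hf


open Classical in
/-- The `n`-completion of a theory along an enumeration of all flowers. -/
noncomputable def completionAux (ψ : Flower V P ar) (T : Set (Flower V P ar))
    (enum : ℕ → Flower V P ar) : ℕ → Set (Flower V P ar)
  | 0 => T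
  | n + 1 =>
      if PsiConsistent ψ (insert (enum n) (completionAux ψ T enum n)) then
        insert (enum n) (completionAux ψ T enum n)
      else completionAux ψ T enum n

/-- The completion of a theory: the union of all its `n`-completions. -/
noncomputable def completion (ψ : Flower V P ar) (T : Set (Flower V P ar))
    (enum : ℕ → Flower V P ar) : Set (Flower V P ar) :=
  ⋃ n, completionAux ψ T enum n

theorem TDerives.mono {T T' : Set (Flower V P ar)} (h : T ⊆ T') {Φ : Bouquet V P ar}
    (hT : TDerives T Φ) : TDerives T' Φ :=
  let ⟨Ψ, hΨ, hprov⟩ := hT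
  ⟨Ψ, fun φ hφ => h (hΨ φ hφ), hprov⟩

/-- A derivation uses only finitely many hypotheses, so these already lie in one member of a
directed family. -/
theorem TDerives.exists_of_iUnion {ι : Type*} [Nonempty ι] {T : ι → Set (Flower V P ar)}
    (hT : Directed (· ⊆ ·) T) {Φ : Bouquet V P ar} (h : TDerives (⋃ i, T i) Φ) :
    ∃ i, TDerives (T i) Φ := by
  classical
  obtain ⟨Ψ, hΨ, hprov⟩ := h
  obtain ⟨i, hi⟩ := hT.exists_mem_subset_of_finset_subset_biUnion (s := Ψ.toFinset)
    fun φ hφ => hΨ φ (List.mem_toFinset.mp hφ)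
  exact ⟨i, Ψ, fun φ hφ => hi (List.mem_toFinset.mpr hφ), hprov⟩

theorem PsiConsistent.iUnion {ι : Type*} [Nonempty ι] {ψ : Flower V P ar}
    {T : ι → Set (Flower V P ar)} (hT : Directed (· ⊆ ·) T)
    (hcons : ∀ i, PsiConsistent ψ (T i)) :
    PsiConsistent ψ (⋃ i, T i) := fun h =>
  let ⟨i, hi⟩ := TDerives.exists_of_iUnion hT h
  hcons i hi

section Completion

variable (ψ : Flower V P ar) (T : Set (Flower V P ar)) (enum : ℕ → Flower V P ar)

theorem monotone_completionAux : Monotone (completionAux ψ T enum) := by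
  refine monotone_nat_of_le_succ fun n => ?_
  rw [completionAux]
  split_ifs
  exacts [Set.subset_insert _ _, le_rfl]

theorem psiConsistent_completionAux (hcons : PsiConsistent ψ T) (n : ℕ) :
    PsiConsistent ψ (completionAux ψ T enum n) := by
  induction n with
  | zero => exact hcons
  | succ n ih =>
    rw [completionAux]
    split_ifs with h
    exacts [h, ih]

theorem psiConsistent_completion (hcons : PsiConsistent ψ T) :
    PsiConsistent ψ (completion ψ T enum) :=
  .iUnion (monotone_completionAux ψ T enum).directed_le
    (psiConsistent_completionAux ψ T enum hcons)

theorem enum_mem_completion_or_tDerives (n : ℕ) :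
    enum n ∈ completion ψ T enum ∨
      TDerives (insert (enum n) (completionAux ψ T enum n)) [ψ] := by
  by_cases h : PsiConsistent ψ (insert (enum n) (completionAux ψ T enum n))
  · refine .inl (Set.mem_iUnion_of_mem (n + 1) ?_)
    rw [completionAux, if_pos h]
    exact Set.mem_insert _ _
  · exact .inr (not_not.mp h)

end Completion

/-- **Completion** (Lemma 33): the completion of a `ψ`-consistent theory along an
enumeration of all flowers is `ψ`-consistent and `ψ`-complete. -/
theorem completion_consistent_complete {V P : Type} [DecidableEq V] [Countable V] [Countable P] {ar : P → ℕ}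
    (ψ : Flower V P ar) (T : Set (Flower V P ar)) (hcons : PsiConsistent ψ T)
    (enum : ℕ → Flower V P ar) (henum : Function.Surjective enum) :
    PsiConsistent ψ (completion ψ T enum) ∧
    PsiComplete ψ (completion ψ T enum) := by
  refine ⟨psiConsistent_completion ψ T enum hcons, fun φ => ?_⟩
  obtain ⟨n, rfl⟩ := henum φ
  rcases enum_mem_completion_or_tDerives ψ T enum n with hmem | hder
  · exact .inr hmem
  · exact .inl (hder.mono (Set.insert_subset_insert (Set.subset_iUnion _ n)))

end Flowers
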